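/- arXiv:2109.01360 — 6 statements merged into one kernel-verified Lean document; each statement's English description precedes it below -/
import Mathlib

section
/- If a Banach lattice E has the unbounded Grothendieck property (every norm bounded sequence in E' that is unbounded weak* null is weakly null), then E has the disjoint Grothendieck property (every norm bounded pairwise disjoint sequence in E' is weakly null). -/
open Filter Topology NormedSpace

section Defs
variable (E : Type*) [NormedAddCommGroup E] [NormedSpace ℝ E] [Lattice (StrongDual ℝ E)]

/-- A sequence in the dual is weak* null. -/
def WeakStarNull (x' : ℕ → StrongDual ℝ E) : Prop :=
  ∀ v : E, Tendsto (fun n => x' n v) atTop (𝓝 0)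

/-- A sequence in the dual is weakly null (null for the weak topology of `E'`). -/
def WeaklyNullDual (x' : ℕ → StrongDual ℝ E) : Prop :=
  ∀ F : StrongDual ℝ (StrongDual ℝ E), Tendsto (fun n => F (x' n)) atTop (𝓝 0)

/-- A sequence in the dual is unbounded weak* null: `|xₙ'| ⊓ u' → 0` weak* for every `0 ≤ u'`. -/
def UawStarNull (x' : ℕ → StrongDual ℝ E) : Prop :=
  ∀ u' : StrongDual ℝ E, 0 ≤ u' → ∀ v : E, Tendsto (fun n => (|x' n| ⊓ u') v) atTop (𝓝 0)

/-- The unbounded Grothendieck property. -/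
def HasUGP : Prop :=
  ∀ x' : ℕ → StrongDual ℝ E, (∃ C, ∀ n, ‖x' n‖ ≤ C) → UawStarNull E x' → WeaklyNullDual E x'

/-- The disjoint Grothendieck property. -/
def HasDGP : Prop :=
  ∀ x' : ℕ → StrongDual ℝ E, (∃ C, ∀ n, ‖x' n‖ ≤ C) →
    (Pairwise fun m n => |x' m| ⊓ |x' n| = 0) → WeaklyNullDual E x'

/-- The weak Grothendieck property. -/
def HasWGP : Prop :=
  ∀ x' : ℕ → StrongDual ℝ E, (Pairwise fun m n => |x' m| ⊓ |x' n| = 0) →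
    WeakStarNull E x' → WeaklyNullDual E x'

/-- The Grothendieck property. -/
def HasGP : Prop :=
  ∀ x' : ℕ → StrongDual ℝ E, WeakStarNull E x' → WeaklyNullDual E x'

/-- The positive Grothendieck property. -/
def HasPGP : Prop :=
  ∀ x' : ℕ → StrongDual ℝ E, (∀ n, 0 ≤ x' n) → WeakStarNull E x' → WeaklyNullDual E x'

/-- The norm is order continuous: any downward directed set with infimum `0`
contains elements of arbitrarily small norm. -/
def HasOrderContinuousNorm (X : Type*) [NormedAddCommGroup X] [Lattice X] : Prop :=
  ∀ A : Set X, A.Nonempty → DirectedOn (· ≥ ·) A → IsGLB A 0 →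
    ∀ ε : ℝ, 0 < ε → ∃ a ∈ A, ‖a‖ < ε

/-- σ-order completeness: every nonempty countable order bounded set has a supremum. -/
def SigmaOrderComplete (X : Type*) [Lattice X] : Prop :=
  ∀ A : Set X, A.Countable → A.Nonempty → BddAbove A → ∃ s, IsLUB A s

end Defs

/-!
Cut the sequence at a positive functional `u'`: the functionals `yₙ = |xₙ'| ⊓ u'` are positive,
pairwise disjoint and bounded by `u'`, so every finite sum of them is still bounded by `u'`.
Evaluated at `w ≥ 0`, the series `∑ yₙ(w)` therefore has bounded partial sums and nonnegative
terms, so `yₙ(w) → 0`; splitting `v = v⁺ - v⁻` gives `yₙ(v) → 0`. Thus a disjoint sequence is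
unbounded weak* null, and the UGP makes it weakly null.
-/

section LatticeOrderedAddCommGroup

variable {α : Type*} [Lattice α] [AddCommGroup α] [IsOrderedAddMonoid α]

theorem add_inf_eq_zero_of_inf_eq_zero {a b c : α} (ha : 0 ≤ a) (hb : 0 ≤ b) (hc : 0 ≤ c)
    (hac : a ⊓ c = 0) (hbc : b ⊓ c = 0) : (a + b) ⊓ c = 0 := by
  have h_le_a : (a + b) ⊓ c ≤ a :=
    calc (a + b) ⊓ c ≤ (a + b) ⊓ (a + c) := inf_le_inf_left _ (le_add_of_nonneg_left ha)
      _ = a := by rw [← add_inf, hbc, add_zero]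
  refine le_antisymm ?_ (le_inf (add_nonneg ha hb) hc)
  exact hac ▸ le_inf h_le_a inf_le_right

variable {ι : Type*} {y : ι → α}

theorem Finset.sum_inf_eq_zero_of_pairwise_inf_eq_zero (hy : ∀ i, 0 ≤ y i)
    (hdisj : Pairwise fun i j => y i ⊓ y j = 0) {a : ι} {s : Finset ι} (ha : a ∉ s) :
    (∑ i ∈ s, y i) ⊓ y a = 0 := by
  classical
  induction s using Finset.induction_on with
  | empty => exact inf_eq_left.mpr (hy a)
  | @insert b s hb ih =>
    rw [Finset.mem_insert, not_or] at ha
    rw [Finset.sum_insert hb]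
    exact add_inf_eq_zero_of_inf_eq_zero (hy b) (Finset.sum_nonneg fun i _ => hy i) (hy a)
      (hdisj (Ne.symm ha.1)) (ih ha.2)

theorem Finset.sum_le_of_pairwise_inf_eq_zero (hy : ∀ i, 0 ≤ y i)
    (hdisj : Pairwise fun i j => y i ⊓ y j = 0) {u : α} (hu : 0 ≤ u) (hyu : ∀ i, y i ≤ u)
    (s : Finset ι) : ∑ i ∈ s, y i ≤ u := by
  classical
  induction s using Finset.induction_on with
  | empty => simpa using hu
  | @insert b s hb ih =>
    have h_disj : y b ⊓ ∑ i ∈ s, y i = 0 := by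
      rw [inf_comm]; exact Finset.sum_inf_eq_zero_of_pairwise_inf_eq_zero hy hdisj hb
    -- disjoint summands add up to their supremum
    rw [Finset.sum_insert hb, ← inf_add_sup, h_disj, zero_add]
    exact sup_le (hyu b) ih

theorem tendsto_zero_of_pairwise_inf_eq_zero (φ : α →+ ℝ) (hφ : Monotone φ) {y : ℕ → α}
    (hy : ∀ n, 0 ≤ y n) (hdisj : Pairwise fun m n => y m ⊓ y n = 0) {u : α} (hu : 0 ≤ u)
    (hyu : ∀ n, y n ≤ u) : Tendsto (fun n => φ (y n)) atTop (𝓝 0) := by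
  have h_nonneg : ∀ n, 0 ≤ φ (y n) := fun n => map_zero φ ▸ hφ (hy n)
  have h_partial : ∀ N, ∑ n ∈ Finset.range N, φ (y n) ≤ φ u := fun N => by
    rw [← map_sum]
    exact hφ (Finset.sum_le_of_pairwise_inf_eq_zero hy hdisj hu hyu _)
  exact (summable_of_sum_range_le h_nonneg h_partial).tendsto_atTop_zero

end LatticeOrderedAddCommGroup

namespace StrongDual

variable {E : Type*} [NormedAddCommGroup E] [NormedSpace ℝ E]

section LE

variable [LE E] [Lattice (StrongDual ℝ E)]
  (hord : ∀ f g : StrongDual ℝ E, f ≤ g ↔ ∀ x : E, 0 ≤ x → f x ≤ g x)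
include hord

theorem isOrderedAddMonoid_of_le_iff : IsOrderedAddMonoid (StrongDual ℝ E) where
  add_le_add_left f g hfg h := by
    rw [hord] at hfg ⊢
    intro x hx
    simpa using hfg x hx

theorem monotone_apply_of_le_iff {x : E} (hx : 0 ≤ x) :
    Monotone fun f : StrongDual ℝ E => f x :=
  fun _ _ hfg => (hord _ _).mp hfg x hx

end LE

theorem tendsto_apply_of_tendsto_apply_nonneg [Lattice E] [IsOrderedAddMonoid E]
    {f : ℕ → StrongDual ℝ E} (h : ∀ w : E, 0 ≤ w → Tendsto (fun n => f n w) atTop (𝓝 0))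
    (v : E) : Tendsto (fun n => f n v) atTop (𝓝 0) := by
  have h_split : ∀ n, f n v⁺ - f n v⁻ = f n v := fun n => by
    rw [← map_sub, posPart_sub_negPart]
  simpa [h_split] using (h _ (posPart_nonneg v)).sub (h _ (negPart_nonneg v))

end StrongDual

variable {E : Type*} [NormedAddCommGroup E] [Lattice E] [IsOrderedAddMonoid E] [HasSolidNorm E] [NormedSpace ℝ E] [CompleteSpace E]
  [Lattice (StrongDual ℝ E)]

/-- UGP implies DGP. -/
theorem ugp_implies_dgp (hord : ∀ f g : StrongDual ℝ E, f ≤ g ↔ ∀ x : E, 0 ≤ x → f x ≤ g x) (h : HasUGP E) : HasDGP E := by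
  intro x' hbd hdisj
  refine h x' hbd fun u' hu' => StrongDual.tendsto_apply_of_tendsto_apply_nonneg fun w hw => ?_
  have := StrongDual.isOrderedAddMonoid_of_le_iff hord
  have hy : ∀ n, 0 ≤ |x' n| ⊓ u' := fun n => le_inf (abs_nonneg _) hu'
  have hy_disj : Pairwise fun m n => (|x' m| ⊓ u') ⊓ (|x' n| ⊓ u') = 0 := fun m n hmn =>
    le_antisymm (hdisj hmn ▸ inf_le_inf inf_le_left inf_le_left) (le_inf (hy m) (hy n))
  exact tendsto_zero_of_pairwise_inf_eq_zero (ContinuousLinearMap.apply ℝ ℝ w)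
    (StrongDual.monotone_apply_of_le_iff hord hw) hy hy_disj hu' fun _ => inf_le_right
end

section
/- The Banach lattice ℓ∞ does not have the unbounded Grothendieck property: the standard unit vector basis (e_n), viewed as a sequence in the dual of ℓ∞ via the embedding ℓ¹ ⊆ (ℓ∞)', is unbounded weak* null but not weakly null. -/
open Filter Topology NormedSpace

open ENNReal

/-- ℓ∞ -/
noncomputable abbrev Linf : Type := lp (fun _ : ℕ => ℝ) ∞

/-! For `0 ≤ u'` put `gₙ = |eₙ| ⊓ u' = eₙ ⊓ u'`, a positive functional. Positivity gives
`|gₙ v| ≤ ‖v‖ gₙ 1`, and splitting `1 = δₙ + (1 - δₙ)` gives `gₙ 1 ≤ u' δₙ + eₙ (1 - δₙ) = u' δₙ`.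
The numbers `u' δₙ` are nonnegative with finite partial sums bounded by `u' 1`, so they tend to
`0`, and `(eₙ)` is unbounded weak* null. It is not weakly null, not even weak* null, since
`eₙ 1 = 1` for every `n`. -/

theorem WeaklyNullDual.weakStarNull {E : Type*} [NormedAddCommGroup E] [NormedSpace ℝ E]
    {x' : ℕ → StrongDual ℝ E} (h : WeaklyNullDual E x') : WeakStarNull E x' :=
  fun v => h (inclusionInDoubleDual ℝ E v)

@[simp]
theorem lp.evalCLM_apply {𝕜 α : Type*} {E : α → Type*} [NormedRing 𝕜]
    [∀ i, NormedAddCommGroup (E i)] [∀ i, Module 𝕜 (E i)] [∀ i, IsBoundedSMul 𝕜 (E i)]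
    {p : ℝ≥0∞} [Fact (1 ≤ p)] (i : α) (x : lp E p) :
    lp.evalCLM 𝕜 E p i x = x i :=
  rfl

section

variable {ι : Type*}

theorem abs_apply_le_norm_mul_apply_one {g : StrongDual ℝ (lp (fun _ : ι => ℝ) ∞)}
    (hg : ∀ x : lp (fun _ : ι => ℝ) ∞, (∀ i, 0 ≤ x i) → 0 ≤ g x) (v : lp (fun _ : ι => ℝ) ∞) :
    |g v| ≤ ‖v‖ * g 1 := by
  have hv : ∀ i, |v i| ≤ ‖v‖ := fun i => lp.norm_apply_le_norm top_ne_zero v i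
  have hadd := hg (‖v‖ • 1 + v) fun i => by
    simp only [lp.coeFn_add, lp.coeFn_smul, lp.infty_coeFn_one, Pi.add_apply, Pi.smul_apply,
      Pi.one_apply, smul_eq_mul, mul_one]
    linarith [neg_abs_le (v i), hv i]
  have hsub := hg (‖v‖ • 1 - v) fun i => by
    simp only [lp.coeFn_sub, lp.coeFn_smul, lp.infty_coeFn_one, Pi.sub_apply, Pi.smul_apply,
      Pi.one_apply, smul_eq_mul, mul_one]
    linarith [le_abs_self (v i), hv i]
  rw [map_add, map_smul, smul_eq_mul] at hadd
  rw [map_sub, map_smul, smul_eq_mul] at hsub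
  exact abs_le.mpr ⟨by linarith, by linarith⟩

theorem summable_apply_single [DecidableEq ι] {g : StrongDual ℝ (lp (fun _ : ι => ℝ) ∞)}
    (hg : ∀ x : lp (fun _ : ι => ℝ) ∞, (∀ i, 0 ≤ x i) → 0 ≤ g x) :
    Summable fun i => g (lp.single ∞ i 1) := by
  refine summable_of_sum_le (c := g 1) (fun i => hg _ fun j => ?_) fun s => ?_
  · simp only [lp.single_apply, Pi.single_apply]; split_ifs <;> norm_num
  · rw [← map_sum, ← sub_nonneg, ← map_sub]
    refine hg _ fun j => ?_
    simp only [lp.coeFn_sub, lp.coeFn_sum, lp.infty_coeFn_one, lp.coeFn_single, Pi.sub_apply,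
      Finset.sum_apply, Finset.sum_pi_single, Pi.one_apply]
    split_ifs <;> norm_num

section DualOrder

variable [Lattice (StrongDual ℝ (lp (fun _ : ι => ℝ) ∞))]
  (hord : ∀ f g : StrongDual ℝ (lp (fun _ : ι => ℝ) ∞),
    f ≤ g ↔ ∀ x : lp (fun _ : ι => ℝ) ∞, (∀ i, 0 ≤ x i) → f x ≤ g x)
include hord

theorem apply_nonneg_of_nonneg {g : StrongDual ℝ (lp (fun _ : ι => ℝ) ∞)} (hg : 0 ≤ g)
    (x : lp (fun _ : ι => ℝ) ∞) (hx : ∀ i, 0 ≤ x i) : 0 ≤ g x :=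
  (hord 0 g).mp hg x hx

theorem evalCLM_nonneg (i : ι) : 0 ≤ lp.evalCLM ℝ (fun _ : ι => ℝ) ∞ i :=
  (hord _ _).mpr fun _ hx => hx i

theorem abs_evalCLM (i : ι) :
    |lp.evalCLM ℝ (fun _ : ι => ℝ) ∞ i| = lp.evalCLM ℝ (fun _ : ι => ℝ) ∞ i :=
  sup_eq_left.mpr <| (hord _ _).mpr fun x hx => by
    simp only [neg_apply, lp.evalCLM_apply]
    linarith [hx i]

theorem apply_one_le_apply_single_of_le_evalCLM [DecidableEq ι] {i : ι}
    {g u' : StrongDual ℝ (lp (fun _ : ι => ℝ) ∞)}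
    (hgi : g ≤ lp.evalCLM ℝ (fun _ : ι => ℝ) ∞ i) (hgu : g ≤ u') :
    g 1 ≤ u' (lp.single ∞ i 1) := by
  have hsingle : ∀ j, 0 ≤ (lp.single ∞ i 1 : lp (fun _ : ι => ℝ) ∞) j := fun j => by
    simp only [lp.single_apply, Pi.single_apply]; split_ifs <;> norm_num
  have hrest : ∀ j, 0 ≤ (1 - lp.single ∞ i 1 : lp (fun _ : ι => ℝ) ∞) j := fun j => by
    simp only [lp.coeFn_sub, lp.infty_coeFn_one, lp.coeFn_single, Pi.sub_apply, Pi.one_apply,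
      Pi.single_apply]
    split_ifs <;> norm_num
  have h₁ : g (lp.single ∞ i 1) ≤ u' (lp.single ∞ i 1) := (hord _ _).mp hgu _ hsingle
  have h₂ : g (1 - lp.single ∞ i 1) ≤ 0 := by
    have h := (hord _ _).mp hgi _ hrest
    simpa only [lp.evalCLM_apply, lp.coeFn_sub, lp.infty_coeFn_one, lp.coeFn_single,
      Pi.sub_apply, Pi.one_apply, Pi.single_eq_same, sub_self] using h
  calc g 1 = g (lp.single ∞ i 1) + g (1 - lp.single ∞ i 1) := by rw [← map_add, add_sub_cancel]
    _ ≤ u' (lp.single ∞ i 1) := by linarith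

theorem tendsto_abs_evalCLM_inf_apply {u' : StrongDual ℝ (lp (fun _ : ι => ℝ) ∞)} (hu : 0 ≤ u')
    (v : lp (fun _ : ι => ℝ) ∞) :
    Tendsto (fun i => (|lp.evalCLM ℝ (fun _ : ι => ℝ) ∞ i| ⊓ u') v) cofinite (𝓝 0) := by
  classical
  have hpos : ∀ i, 0 ≤ |lp.evalCLM ℝ (fun _ : ι => ℝ) ∞ i| ⊓ u' := fun i =>
    le_inf ((abs_evalCLM hord i).symm ▸ evalCLM_nonneg hord i) hu
  have hsmall :=
    ((summable_apply_single (apply_nonneg_of_nonneg hord hu)).tendsto_cofinite_zero).const_mul ‖v‖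
  rw [mul_zero] at hsmall
  refine squeeze_zero_norm (fun i => ?_) hsmall
  rw [Real.norm_eq_abs]
  refine (abs_apply_le_norm_mul_apply_one (apply_nonneg_of_nonneg hord (hpos i)) v).trans ?_
  gcongr
  exact apply_one_le_apply_single_of_le_evalCLM hord
    (inf_le_left.trans_eq (abs_evalCLM hord i)) inf_le_right

end DualOrder

end

/-- ℓ∞ does not have the unbounded Grothendieck property: the standard unit vectors
of ℓ¹ ⊆ (ℓ∞)', i.e. the coordinate evaluations, form a norm bounded unbounded weak* null
sequence which is not weakly null. -/
theorem linf_not_ugp [Lattice (StrongDual ℝ Linf)]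
    (hord : ∀ f g : StrongDual ℝ Linf, f ≤ g ↔ ∀ x : Linf, (∀ i, 0 ≤ x i) → f x ≤ g x) :
    ¬ HasUGP Linf ∧
    ∃ e' : ℕ → StrongDual ℝ Linf, (∀ n (x : Linf), e' n x = x n) ∧
      (∃ C, ∀ n, ‖e' n‖ ≤ C) ∧ UawStarNull Linf e' ∧ ¬ WeaklyNullDual Linf e' := by
  set e' : ℕ → StrongDual ℝ Linf := lp.evalCLM ℝ (fun _ : ℕ => ℝ) ∞
  have hbdd : ∃ C, ∀ n, ‖e' n‖ ≤ C := ⟨1, fun _ => LinearMap.mkContinuous_norm_le _ zero_le_one _⟩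
  have huaw : UawStarNull Linf e' := fun u' hu v =>
    Nat.cofinite_eq_atTop ▸ tendsto_abs_evalCLM_inf_apply hord hu v
  have hnw : ¬ WeaklyNullDual Linf e' := fun h =>
    one_ne_zero <| tendsto_nhds_unique tendsto_const_nhds (h.weakStarNull 1)
  exact ⟨fun h => hnw (h e' hbdd huaw), e', fun _ _ => rfl, hbdd, huaw, hnw⟩
end

section
/- The Banach lattice ℓ∞ does not have the disjoint Grothendieck property: the sequence u_n in ℓ¹ ⊆ (ℓ∞)' given by u_n = e_{2n} + e_{2n+1} is norm bounded and pairwise disjoint but not weakly null in (ℓ∞)'. -/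
open Filter Topology NormedSpace

open ENNReal

/-!
With `u n = e_{2n} + e_{2n+1}`, each `u n` is a positive functional. For `m ≠ n` any positive
`x ∈ ℓ∞` splits into a positive part supported on `{2n, 2n+1}`, killed by `u m`, and a positive
remainder, killed by `u n`; evaluating `u m ⊓ u n ≤ u m, u n` on the two parts gives
`u m ⊓ u n = 0`. Yet every `u n` takes the value `2` at the constant sequence `1`, so the `u n`
are not weakly null.
-/

section PositiveConeOrder

variable {E : Type*} [NormedAddCommGroup E] [NormedSpace ℝ E] [Lattice (StrongDual ℝ E)]
  {P : E → Prop}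

theorem StrongDual.nonneg_iff_of_le_iff
    (hord : ∀ f g : StrongDual ℝ E, f ≤ g ↔ ∀ x, P x → f x ≤ g x)
    (f : StrongDual ℝ E) : 0 ≤ f ↔ ∀ x, P x → 0 ≤ f x := by
  simp only [hord, zero_apply]

theorem StrongDual.abs_eq_self_of_le_iff
    (hord : ∀ f g : StrongDual ℝ E, f ≤ g ↔ ∀ x, P x → f x ≤ g x) {f : StrongDual ℝ E}
    (hf : ∀ x, P x → 0 ≤ f x) : |f| = f := by
  refine sup_eq_left.mpr ((hord _ _).mpr fun x hx => ?_)
  rw [neg_apply]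
  linarith [hf x hx]

theorem StrongDual.inf_eq_zero_of_le_iff
    (hord : ∀ f g : StrongDual ℝ E, f ≤ g ↔ ∀ x, P x → f x ≤ g x) {f g : StrongDual ℝ E}
    (hf : ∀ x, P x → 0 ≤ f x) (hg : ∀ x, P x → 0 ≤ g x)
    (hsplit : ∀ x, P x → ∃ y, P y ∧ ∃ z, P z ∧ x = y + z ∧ f y = 0 ∧ g z = 0) : f ⊓ g = 0 := by
  have hnonneg : 0 ≤ f ⊓ g :=
    le_inf ((nonneg_iff_of_le_iff hord f).mpr hf) ((nonneg_iff_of_le_iff hord g).mpr hg)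
  refine le_antisymm ((hord _ _).mpr fun x hx => ?_) hnonneg
  obtain ⟨y, hy, z, hz, rfl, hfy, hgz⟩ := hsplit x hx
  calc (f ⊓ g) (y + z) = (f ⊓ g) y + (f ⊓ g) z := map_add _ y z
    _ ≤ f y + g z := add_le_add ((hord _ _).mp inf_le_left y hy) ((hord _ _).mp inf_le_right z hz)
    _ = (0 : StrongDual ℝ E) (y + z) := by simp [hfy, hgz]

end PositiveConeOrder

theorem not_weaklyNullDual_of_apply_eq {E : Type*} [NormedAddCommGroup E] [NormedSpace ℝ E]
    [Lattice (StrongDual ℝ E)] {x' : ℕ → StrongDual ℝ E} (F : StrongDual ℝ (StrongDual ℝ E))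
    {c : ℝ} (hc : c ≠ 0) (hF : ∀ n, F (x' n) = c) : ¬ WeaklyNullDual E x' := fun h => by
  have hlim := h F
  simp only [hF] at hlim
  exact hc (tendsto_nhds_unique tendsto_const_nhds hlim)

namespace Linf

noncomputable def pairEval (n : ℕ) : StrongDual ℝ Linf :=
  lp.evalCLM ℝ (fun _ : ℕ => ℝ) ∞ (2 * n) + lp.evalCLM ℝ (fun _ : ℕ => ℝ) ∞ (2 * n + 1)

theorem pairEval_apply (n : ℕ) (x : Linf) : pairEval n x = x (2 * n) + x (2 * n + 1) := rfl

theorem norm_pairEval_le (n : ℕ) : ‖pairEval n‖ ≤ 2 :=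
  calc ‖pairEval n‖ ≤ 1 + 1 :=
        (norm_add_le _ _).trans (add_le_add (LinearMap.mkContinuous_norm_le _ zero_le_one _)
          (LinearMap.mkContinuous_norm_le _ zero_le_one _))
    _ = 2 := one_add_one_eq_two

theorem pairEval_one (n : ℕ) : pairEval n 1 = 2 := by
  simp only [pairEval_apply, lp.infty_coeFn_one, Pi.one_apply, one_add_one_eq_two]

theorem pairEval_nonneg (n : ℕ) {x : Linf} (hx : ∀ i, 0 ≤ x i) : 0 ≤ pairEval n x :=
  add_nonneg (hx _) (hx _)

theorem exists_nonneg_split_pairEval {m n : ℕ} (hmn : m ≠ n) {x : Linf} (hx : ∀ i, 0 ≤ x i) :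
    ∃ y : Linf, (∀ i, 0 ≤ y i) ∧ ∃ z : Linf, (∀ i, 0 ≤ z i) ∧
      x = y + z ∧ pairEval m y = 0 ∧ pairEval n z = 0 := by
  set y : Linf := lp.single ∞ (2 * n) (x (2 * n)) + lp.single ∞ (2 * n + 1) (x (2 * n + 1))
  have hy : ∀ i, y i = if i = 2 * n ∨ i = 2 * n + 1 then x i else 0 := by
    intro i
    simp only [y, lp.coeFn_add, Pi.add_apply, lp.single_apply, Pi.single_apply]
    split_ifs <;> first | omega | simp_all
  refine ⟨y, fun i => ?_, x - y, fun i => ?_, (add_sub_cancel y x).symm, ?_, ?_⟩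
  · rw [hy]; split_ifs <;> simp [hx i]
  · rw [lp.coeFn_sub, Pi.sub_apply, hy]; split_ifs <;> simp [hx i]
  · rw [pairEval_apply, hy, hy, if_neg (by omega), if_neg (by omega), add_zero]
  · simp only [pairEval_apply, lp.coeFn_sub, Pi.sub_apply, hy, if_pos, true_or, or_true, sub_self,
      add_zero]

end Linf

open Linf in
/-- ℓ∞ does not have the disjoint Grothendieck property: the sequence
`uₙ = e_{2n} + e_{2n+1}` of ℓ¹ ⊆ (ℓ∞)' is norm bounded and pairwise disjoint,
but not weakly null in (ℓ∞)'. -/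
theorem linf_not_dgp [Lattice (StrongDual ℝ Linf)]
    (hord : ∀ f g : StrongDual ℝ Linf, f ≤ g ↔ ∀ x : Linf, (∀ i, 0 ≤ x i) → f x ≤ g x) :
    ¬ HasDGP Linf ∧
    ∃ u' : ℕ → StrongDual ℝ Linf, (∀ n (x : Linf), u' n x = x (2 * n) + x (2 * n + 1)) ∧
      (∃ C, ∀ n, ‖u' n‖ ≤ C) ∧ (Pairwise fun m n => |u' m| ⊓ |u' n| = 0) ∧
      ¬ WeaklyNullDual Linf u' := by
  have hbdd : ∃ C, ∀ n, ‖pairEval n‖ ≤ C := ⟨2, norm_pairEval_le⟩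
  have habs : ∀ n, |pairEval n| = pairEval n := fun n =>
    StrongDual.abs_eq_self_of_le_iff hord fun _ => pairEval_nonneg n
  have hdisj : Pairwise fun m n => |pairEval m| ⊓ |pairEval n| = 0 := fun m n hmn => by
    simp only [habs]
    exact StrongDual.inf_eq_zero_of_le_iff hord (fun _ => pairEval_nonneg m)
      (fun _ => pairEval_nonneg n) fun x hx => exists_nonneg_split_pairEval hmn hx
  have hnull : ¬ WeaklyNullDual Linf pairEval :=
    not_weaklyNullDual_of_apply_eq (inclusionInDoubleDual ℝ Linf 1) two_ne_zero pairEval_one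
  exact ⟨fun hdgp => hnull (hdgp pairEval hbdd hdisj), pairEval, pairEval_apply, hbdd, hdisj, hnull⟩
end

section
/- The Banach lattice ℓ¹ has the disjoint Grothendieck property: every norm bounded pairwise disjoint sequence in ℓ∞ = (ℓ¹)' is weakly null. -/
open Filter Topology NormedSpace

open ENNReal

/-!
Signs `cₙ = sign F(xₙ)` turn a finite sum `∑ |F(xₙ)|` into `F(∑ cₙ xₙ)`. For pairwise disjoint
`xₙ ∈ ℓ∞`, every coordinate of `∑ cₙ xₙ` has at most one nonzero term, so `‖∑ cₙ xₙ‖ ≤ sup ‖xₙ‖`.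
Hence `∑ |F(xₙ)| ≤ ‖F‖ sup ‖xₙ‖ < ∞` for every `F ∈ (ℓ∞)'`, and in particular `F(xₙ) → 0`.
-/

theorem norm_sum_le_of_pairwise_eq_zero_or_eq_zero {ι G : Type*} [SeminormedAddCommGroup G]
    {f : ι → G} {C : ℝ} (hC : 0 ≤ C) (hf : ∀ n, ‖f n‖ ≤ C)
    (hd : Pairwise fun m n => f m = 0 ∨ f n = 0) (s : Finset ι) :
    ‖∑ n ∈ s, f n‖ ≤ C := by
  by_cases h : ∃ n₀ ∈ s, f n₀ ≠ 0
  · obtain ⟨n₀, hn₀s, hn₀⟩ := h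
    rw [Finset.sum_eq_single_of_mem n₀ hn₀s fun m _ hm => (hd hm).resolve_right hn₀]
    exact hf n₀
  · push Not at h
    rwa [Finset.sum_eq_zero h, norm_zero]

theorem lp.norm_sum_smul_le_of_pairwise_disjoint {α : Type*} {E : α → Type*}
    [∀ i, NormedAddCommGroup (E i)] [∀ i, NormedSpace ℝ (E i)]
    {x : ℕ → lp E ∞} {C : ℝ} (hC : ∀ n, ‖x n‖ ≤ C)
    (hd : Pairwise fun m n => ∀ i, x m i = 0 ∨ x n i = 0)
    (s : Finset ℕ) {c : ℕ → ℝ} (hc : ∀ n, |c n| ≤ 1) :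
    ‖∑ n ∈ s, c n • x n‖ ≤ C := by
  have hC₀ : 0 ≤ C := (norm_nonneg _).trans (hC 0)
  refine lp.norm_le_of_forall_le hC₀ fun i => ?_
  have hcoord : (∑ n ∈ s, c n • x n) i = ∑ n ∈ s, c n • x n i := by
    simp only [lp.coeFn_sum, Finset.sum_apply, lp.coeFn_smul, Pi.smul_apply]
  rw [hcoord]
  refine norm_sum_le_of_pairwise_eq_zero_or_eq_zero hC₀ (fun n => ?_)
    (fun m n hmn => (hd hmn i).imp (by simp [·]) (by simp [·])) s
  calc ‖c n • x n i‖ = |c n| * ‖x n i‖ := by rw [norm_smul, Real.norm_eq_abs]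
    _ ≤ 1 * ‖x n‖ := by
        gcongr
        · exact hc n
        · exact lp.norm_apply_le_norm ENNReal.top_ne_zero (x n) i
    _ ≤ C := by rw [one_mul]; exact hC n

theorem summable_abs_apply_of_norm_sum_smul_le {ι E : Type*} [SeminormedAddCommGroup E]
    [NormedSpace ℝ E] {x : ι → E} {C : ℝ}
    (hx : ∀ (s : Finset ι) (c : ι → ℝ), (∀ n, |c n| ≤ 1) → ‖∑ n ∈ s, c n • x n‖ ≤ C)
    (F : StrongDual ℝ E) : Summable fun n => |F (x n)| := by
  refine summable_of_sum_le (c := ‖F‖ * C) (fun n => abs_nonneg _) fun s => ?_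
  have hsign : ∀ n, |((SignType.sign (F (x n)) : SignType) : ℝ)| ≤ 1 := fun n => by
    cases SignType.sign (F (x n)) <;> simp
  calc ∑ n ∈ s, |F (x n)| = F (∑ n ∈ s, (SignType.sign (F (x n)) : ℝ) • x n) := by
        simp only [map_sum, map_smul, smul_eq_mul, sign_mul_self]
    _ ≤ ‖F‖ * ‖∑ n ∈ s, (SignType.sign (F (x n)) : ℝ) • x n‖ :=
        (le_abs_self _).trans (F.le_opNorm _)
    _ ≤ ‖F‖ * C := by gcongr; exact hx s _ hsign

/-- ℓ¹ has the disjoint Grothendieck property: every norm bounded pairwise disjoint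
sequence in ℓ∞ = (ℓ¹)' is weakly null (disjointness of ℓ∞ is pointwise). -/
theorem lone_dgp (x : ℕ → Linf) (hb : ∃ C, ∀ n, ‖x n‖ ≤ C)
    (hd : Pairwise fun m n => ∀ i, min |x m i| |x n i| = 0) :
    ∀ F : StrongDual ℝ Linf, Tendsto (fun n => F (x n)) atTop (𝓝 0) := by
  obtain ⟨C, hC⟩ := hb
  have hd' : Pairwise fun m n => ∀ i, x m i = 0 ∨ x n i = 0 := fun m n hmn i =>
    (min_eq_iff.mp (hd hmn i)).imp (abs_eq_zero.mp ·.1) (abs_eq_zero.mp ·.1)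
  intro F
  have hsum := summable_abs_apply_of_norm_sum_smul_le
    (fun s _ hc => lp.norm_sum_smul_le_of_pairwise_disjoint hC hd' s hc) F
  exact tendsto_zero_iff_abs_tendsto_zero _ |>.mpr hsum.tendsto_atTop_zero
end

section
/- The Banach lattice ℓ¹ does not have the unbounded Grothendieck property: the sequence v_n ∈ ℓ∞ = (ℓ¹)' whose first n coordinates are 0 and remaining coordinates are 1 is unbounded weak* null but not weakly null in ℓ∞. -/
/-!
The order of `(ℓ¹)' = ℓ∞` is tested on the positive cone of `ℓ¹`. Hence a functional `w` with
`0 ≤ w ≤ u'` satisfies `|w x| ≤ w |x| ≤ u' |x| ≤ ‖u'‖ ‖x‖`, so the truncations `|vₙ| ⊓ u'` are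
uniformly bounded; they vanish on the unit vectors `e₀, …, eₙ₋₁`, and a bounded sequence of
functionals that tends to zero on every `eₖ` tends to zero on their dense span and therefore
everywhere. Thus `vₙ` is unbounded weak* null. On the other hand, Banach–Alaoglu gives a weak*
limit `F ∈ ℓ∞'` of the `eₖ` along a free ultrafilter, and `F vₙ = 1` for all `n` because
`vₙ eₖ = 1` for `k ≥ n`.
-/

open Filter Topology NormedSpace

open ENNReal

/-- ℓ¹ -/
noncomputable abbrev Lone : Type := lp (fun _ : ℕ => ℝ) 1

theorem exists_tendsto_ultrafilter_apply {E ι : Type*} [NormedAddCommGroup E] [NormedSpace ℝ E]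
    (e : ι → E) {C : ℝ} (he : ∀ i, ‖e i‖ ≤ C) (𝒰 : Ultrafilter ι) :
    ∃ F : StrongDual ℝ (StrongDual ℝ E), ∀ f, Tendsto (fun i => f (e i)) 𝒰 (𝓝 (F f)) := by
  let J : ι → WeakDual ℝ (StrongDual ℝ E) := fun i => inclusionInDoubleDual ℝ E (e i)
  have hJ (i : ι) : ‖WeakDual.toStrongDual (J i)‖ ≤ C :=
    (double_dual_bound ℝ E (e i)).trans (he i)
  obtain ⟨F, -, hF⟩ := (WeakDual.isCompact_closedBall 0 C).ultrafilter_le_nhds (𝒰.map J) <| by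
    rw [Ultrafilter.coe_map, le_principal_iff, mem_map]
    exact univ_mem' fun i => by simpa using hJ i
  exact ⟨WeakDual.toStrongDual F, fun f => ((WeakDual.eval_continuous f).tendsto F).comp hF⟩

theorem not_weaklyNullDual_of_tendsto_apply {E : Type*} [NormedAddCommGroup E] [NormedSpace ℝ E]
    {v : ℕ → StrongDual ℝ E} (e : ℕ → E) {C : ℝ} (he : ∀ k, ‖e k‖ ≤ C) {a : ℝ} (ha : a ≠ 0)
    (hv : ∀ n, Tendsto (fun k => v n (e k)) atTop (𝓝 a)) : ¬ WeaklyNullDual E v := by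
  obtain ⟨F, hF⟩ := exists_tendsto_ultrafilter_apply e he (hyperfilter ℕ)
  have hFv (n : ℕ) : F (v n) = a :=
    tendsto_nhds_unique (hF (v n)) ((hv n).mono_left Nat.hyperfilter_le_atTop)
  intro h
  exact ha (tendsto_const_nhds_iff.1 (by simpa only [hFv] using h F))

namespace Lone

theorem hasSum_norm (x : Lone) : HasSum (fun i => ‖x i‖) ‖x‖ := by
  simpa using lp.hasSum_norm (p := 1) (by norm_num) x

theorem exists_abs (x : Lone) : ∃ y : Lone, (∀ i, y i = |x i|) ∧ ‖y‖ = ‖x‖ := by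
  refine ⟨⟨fun i => ‖x i‖, memℓp_norm_iff.2 (lp.memℓp x)⟩, fun i => rfl, ?_⟩
  refine (hasSum_norm _).unique ?_
  simpa using hasSum_norm x

theorem single_nonneg (k i : ℕ) : 0 ≤ (lp.single 1 k (1 : ℝ) : Lone) i := by
  rw [lp.single_apply, Pi.single_apply]
  split_ifs <;> norm_num

theorem tendsto_apply_of_tendsto_apply_single {ι : Type*} {l : Filter ι}
    {w : ι → StrongDual ℝ Lone} (hw : ∃ C, ∀ n, ‖w n‖ ≤ C)
    (hs : ∀ k, Tendsto (fun n => w n (lp.single 1 k 1)) l (𝓝 0)) (x : Lone) :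
    Tendsto (fun n => w n x) l (𝓝 0) := by
  have hequi : Equicontinuous ((↑) ∘ w : ι → Lone → ℝ) :=
    ((NormedSpace.equicontinuous_TFAE w).out 5 1).mp hw
  have hclosed : IsClosed {x : Lone | Tendsto (fun n => w n x) l (𝓝 0)} :=
    hequi.isClosed_setOfPred_tendsto continuous_const
  refine hclosed.mem_of_tendsto (lp.hasSum_single one_ne_top x) (Eventually.of_forall fun s => ?_)
  have hsingle : ∀ n k, w n (lp.single 1 k (x k)) = x k * w n (lp.single 1 k 1) := fun n k => by
    rw [← smul_eq_mul, ← map_smul, ← lp.single_smul, smul_eq_mul, mul_one]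
  simpa [hsingle] using tendsto_finsetSum s fun k _ => (hs k).const_mul (x k)

theorem summable_mul (c : lp (fun _ : ℕ => ℝ) ∞) (x : Lone) : Summable fun i => c i * x i :=
  .of_norm_bounded ((hasSum_norm x).summable.mul_left ‖c‖) fun i => by
    rw [norm_mul]
    gcongr
    exact lp.norm_apply_le_norm top_ne_zero c i

noncomputable def linftyPairing (c : lp (fun _ : ℕ => ℝ) ∞) : StrongDual ℝ Lone :=
  LinearMap.mkContinuous
    { toFun x := ∑' i, c i * x i
      map_add' x y := by
        simp only [lp.coeFn_add, Pi.add_apply, mul_add]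
        exact (summable_mul c x).tsum_add (summable_mul c y)
      map_smul' a x := by
        simp only [lp.coeFn_smul, Pi.smul_apply, smul_eq_mul, RingHom.id_apply, ← tsum_mul_left]
        exact tsum_congr fun i => by ring }
    ‖c‖ fun x => tsum_of_norm_bounded ((hasSum_norm x).mul_left ‖c‖) fun i => by
      rw [norm_mul]
      gcongr
      exact lp.norm_apply_le_norm top_ne_zero c i

theorem linftyPairing_apply (c : lp (fun _ : ℕ => ℝ) ∞) (x : Lone) :
    linftyPairing c x = ∑' i, c i * x i := rfl

theorem norm_linftyPairing_le (c : lp (fun _ : ℕ => ℝ) ∞) : ‖linftyPairing c‖ ≤ ‖c‖ :=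
  LinearMap.mkContinuous_norm_le _ (norm_nonneg c) _

theorem linftyPairing_single (c : lp (fun _ : ℕ => ℝ) ∞) (k : ℕ) :
    linftyPairing c (lp.single 1 k 1) = c k := by
  rw [linftyPairing_apply, tsum_eq_single k fun i hi => by simp [hi]]
  simp

def IsPointwiseDualOrder [Lattice (StrongDual ℝ Lone)] : Prop :=
  ∀ f g : StrongDual ℝ Lone, f ≤ g ↔ ∀ x : Lone, (∀ i, 0 ≤ x i) → f x ≤ g x

namespace IsPointwiseDualOrder

variable [Lattice (StrongDual ℝ Lone)] {w u : StrongDual ℝ Lone}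

theorem nonneg_iff (h : IsPointwiseDualOrder) :
    0 ≤ w ↔ ∀ x : Lone, (∀ i, 0 ≤ x i) → 0 ≤ w x := by
  simpa using h 0 w

theorem abs_nonneg (h : IsPointwiseDualOrder) (w : StrongDual ℝ Lone) : 0 ≤ |w| :=
  h.nonneg_iff.2 fun x hx => by
    have h₁ := (h w |w|).1 le_sup_left x hx
    have h₂ := (h (-w) |w|).1 le_sup_right x hx
    rw [neg_apply] at h₂
    linarith

theorem abs_of_nonneg (h : IsPointwiseDualOrder) (hw : 0 ≤ w) : |w| = w :=
  sup_eq_left.2 <| (h _ _).2 fun x hx => by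
    have := h.nonneg_iff.1 hw x hx
    rw [neg_apply]
    linarith

theorem norm_le_norm_of_nonneg_of_le (h : IsPointwiseDualOrder) (hw : 0 ≤ w) (hwu : w ≤ u) :
    ‖w‖ ≤ ‖u‖ := by
  refine w.opNorm_le_bound (norm_nonneg u) fun x => ?_
  obtain ⟨y, hy, hyx⟩ := exists_abs x
  have hy₀ : ∀ i, 0 ≤ y i := fun i => hy i ▸ _root_.abs_nonneg _
  have hsub := h.nonneg_iff.1 hw (y - x) fun i => by
    rw [lp.coeFn_sub, Pi.sub_apply, hy]
    exact sub_nonneg.2 (le_abs_self _)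
  have hadd := h.nonneg_iff.1 hw (y + x) fun i => by
    rw [lp.coeFn_add, Pi.add_apply, hy]
    exact neg_le_iff_add_nonneg'.1 (neg_abs_le _)
  rw [map_sub] at hsub
  rw [map_add] at hadd
  calc ‖w x‖ ≤ w y := abs_le.2 ⟨by linarith, by linarith⟩
    _ ≤ u y := (h w u).1 hwu y hy₀
    _ ≤ ‖u‖ * ‖y‖ := (le_abs_self _).trans (u.le_opNorm y)
    _ = ‖u‖ * ‖x‖ := by rw [hyx]

theorem linftyPairing_nonneg (h : IsPointwiseDualOrder) {c : lp (fun _ : ℕ => ℝ) ∞}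
    (hc : ∀ i, 0 ≤ c i) : 0 ≤ linftyPairing c :=
  h.nonneg_iff.2 fun x hx =>
    (linftyPairing_apply c x).symm ▸ tsum_nonneg fun i => mul_nonneg (hc i) (hx i)

theorem uawStarNull_of_tendsto_abs_single (h : IsPointwiseDualOrder) {v : ℕ → StrongDual ℝ Lone}
    (hv : ∀ k, Tendsto (fun n => |v n| (lp.single 1 k 1)) atTop (𝓝 0)) : UawStarNull Lone v := by
  intro u hu
  have hw₀ : ∀ n, 0 ≤ |v n| ⊓ u := fun n => le_inf (h.abs_nonneg _) hu
  refine tendsto_apply_of_tendsto_apply_single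
    ⟨‖u‖, fun n => h.norm_le_norm_of_nonneg_of_le (hw₀ n) inf_le_right⟩ fun k => ?_
  exact tendsto_of_tendsto_of_tendsto_of_le_of_le tendsto_const_nhds (hv k)
    (fun n => h.nonneg_iff.1 (hw₀ n) _ (single_nonneg k))
    (fun n => (h _ _).1 inf_le_left _ (single_nonneg k))

end IsPointwiseDualOrder

end Lone

noncomputable def tailIndicator (n : ℕ) : lp (fun _ : ℕ => ℝ) ∞ :=
  ⟨fun i => if i < n then 0 else 1, memℓp_infty ⟨1, by
    rintro _ ⟨i, rfl⟩
    dsimp only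
    split_ifs <;> simp⟩⟩

theorem tailIndicator_apply (n i : ℕ) : tailIndicator n i = if i < n then 0 else 1 := rfl

theorem tailIndicator_nonneg (n i : ℕ) : 0 ≤ tailIndicator n i := by
  rw [tailIndicator_apply]
  split_ifs <;> simp

theorem norm_tailIndicator_le (n : ℕ) : ‖tailIndicator n‖ ≤ 1 :=
  lp.norm_le_of_forall_le zero_le_one fun i => by
    rw [tailIndicator_apply]
    split_ifs <;> simp

/-- ℓ¹ does not have the unbounded Grothendieck property: the sequence
`vₙ = (0,…,0,1,1,…)` (n zeros) in ℓ∞ = (ℓ¹)' is norm bounded and unbounded weak* null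
but not weakly null. -/
theorem lone_not_ugp [Lattice (StrongDual ℝ Lone)]
    (hord : ∀ f g : StrongDual ℝ Lone, f ≤ g ↔ ∀ x : Lone, (∀ i, 0 ≤ x i) → f x ≤ g x) :
    ¬ HasUGP Lone ∧
    ∃ v' : ℕ → StrongDual ℝ Lone,
      (∀ n (x : Lone), v' n x = ∑' i, (if i < n then (0 : ℝ) else 1) * x i) ∧
      (∃ C, ∀ n, ‖v' n‖ ≤ C) ∧ UawStarNull Lone v' ∧ ¬ WeaklyNullDual Lone v' := by
  have hord : Lone.IsPointwiseDualOrder := hord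
  let v (n : ℕ) : StrongDual ℝ Lone := Lone.linftyPairing (tailIndicator n)
  have hv_single (n k : ℕ) : v n (lp.single 1 k 1) = if k < n then 0 else 1 :=
    Lone.linftyPairing_single _ k
  have hbdd : ∃ C, ∀ n, ‖v n‖ ≤ C :=
    ⟨1, fun n => (Lone.norm_linftyPairing_le _).trans (norm_tailIndicator_le n)⟩
  have hv_nonneg (n : ℕ) : 0 ≤ v n := hord.linftyPairing_nonneg (tailIndicator_nonneg n)
  have hnull : UawStarNull Lone v := hord.uawStarNull_of_tendsto_abs_single fun k => by
    refine tendsto_const_nhds.congr' ((eventually_gt_atTop k).mono fun n hn => ?_)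
    beta_reduce
    rw [hord.abs_of_nonneg (hv_nonneg n), hv_single, if_pos hn]
  have hnot_weakly : ¬ WeaklyNullDual Lone v :=
    not_weaklyNullDual_of_tendsto_apply (fun k => (lp.single 1 k 1 : Lone))
      (fun k => (lp.norm_single (E := fun _ : ℕ => ℝ) (p := 1) zero_lt_one k 1).le) one_ne_zero
      fun n => tendsto_const_nhds.congr' <| (eventually_ge_atTop n).mono fun k hk =>
        ((hv_single n k).trans (if_neg hk.not_gt)).symm
  exact ⟨fun hugp => hnot_weakly (hugp v hbdd hnull), v, fun _ _ => rfl, hbdd, hnull, hnot_weakly⟩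
end

section
/- If E is an order continuous Banach lattice, then every norm bounded pairwise disjoint sequence in E' is weak* null. -/
open Filter Topology NormedSpace

/-!
Passing to `|x' n|`, it suffices to show `g n x → 0` for pairwise disjoint positive functionals
`g n` of bounded norm and `x ≥ 0`. The lattice operations of `E'` are only known through its order,
so `f ⊓ g` is identified with the Riesz–Kantorovich lower envelope `u ↦ inf {f y + g (u - y)}`.
Disjointness of `g m` from finitely many `g i` then yields splittings of any `0 ≤ r` that are
almost invisible to both sides; iterating them with summable tolerances and passing to the limit
(a decreasing positive sequence is Cauchy when the norm is order continuous) gives `t ∈ [0, x]`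
killed by every `g i`, `i ≠ m`, on which `g m` keeps almost all of `g m x`. If `g n x ≥ ε` for all
`n`, the partial suprema of these `t`'s increase in `[0, x]`, and each increment carries `ε / 2` of
some `g n`, although order continuity forces the increments to become small in norm.
-/

section LatticeOrderedGroup

variable {α : Type*} [AddCommGroup α] [Lattice α] [IsOrderedAddMonoid α]

theorem add_inf_eq_zero {a b c : α} (hac : a ⊓ c = 0) (hbc : b ⊓ c = 0) :
    (a + b) ⊓ c = 0 := by
  have ha : 0 ≤ a := hac ▸ inf_le_left
  have hb : 0 ≤ b := hbc ▸ inf_le_left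
  refine le_antisymm (hac ▸ le_inf ?_ inf_le_right)
    (hac ▸ inf_le_inf_right c (le_add_of_nonneg_right hb))
  calc (a + b) ⊓ c ≤ (a + b) ⊓ (a + c) := inf_le_inf_left _ (le_add_of_nonneg_left ha)
    _ = a := by rw [← add_inf, hbc, add_zero]

theorem sub_inf_le_of_le_add {u v w : α} (hv : 0 ≤ v) (h : w ≤ u + v) : w - w ⊓ u ≤ v := by
  rw [sub_inf, sub_self]
  exact sup_le hv (sub_le_iff_le_add'.2 h)

end LatticeOrderedGroup

section NormedLattice

variable {E : Type*} [NormedAddCommGroup E] [Lattice E] [IsOrderedAddMonoid E] [HasSolidNorm E]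

theorem norm_le_norm_of_nonneg_of_le {a b : E} (ha : 0 ≤ a) (hab : a ≤ b) :
    ‖a‖ ≤ ‖b‖ :=
  norm_le_norm_of_abs_le_abs (by rwa [abs_of_nonneg ha, abs_of_nonneg (ha.trans hab)])

theorem norm_posPart_le (x : E) : ‖x⁺‖ ≤ ‖x‖ := by
  refine (norm_le_norm_of_nonneg_of_le (posPart_nonneg x) ?_).trans_eq (norm_abs_eq_norm x)
  exact (posPart_add_negPart x) ▸ le_add_of_nonneg_right (negPart_nonneg x)

theorem norm_negPart_le (x : E) : ‖x⁻‖ ≤ ‖x‖ := by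
  refine (norm_le_norm_of_nonneg_of_le (negPart_nonneg x) ?_).trans_eq (norm_abs_eq_norm x)
  exact (posPart_add_negPart x) ▸ le_add_of_nonneg_left (posPart_nonneg x)

variable [NormedSpace ℝ E]

theorem eq_zero_of_forall_nsmul_le {p z : E} (hp : 0 ≤ p) (h : ∀ n : ℕ, n • p ≤ z) :
    p = 0 := by
  by_contra hne
  have hpos : 0 < ‖p‖ := norm_pos_iff.2 hne
  obtain ⟨n, hn⟩ := exists_nat_gt (‖z‖ / ‖p‖)
  have hle : (n : ℝ) * ‖p‖ ≤ ‖z‖ := by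
    rw [← nsmul_eq_mul, ← RCLike.norm_nsmul (K := ℝ)]
    exact norm_le_norm_of_nonneg_of_le (nsmul_nonneg hp n) (h n)
  rw [div_lt_iff₀ hpos] at hn
  linarith

theorem HasOrderContinuousNorm.cauchySeq_of_antitone (hoc : HasOrderContinuousNorm E)
    {t : ℕ → E} (ht : Antitone t) (h0 : ∀ k, 0 ≤ t k) : CauchySeq t := by
  set L : Set E := {l | 0 ≤ l ∧ ∀ k, l ≤ t k}
  set A : Set E := {a | ∃ l ∈ L, ∃ N, t N - l = a}
  have hdir : DirectedOn (· ≥ ·) A := by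
    rintro _ ⟨l, hl, N, rfl⟩ _ ⟨l', hl', N', rfl⟩
    have hll' : l ⊔ l' ∈ L := ⟨le_sup_of_le_left hl.1, fun k => sup_le (hl.2 k) (hl'.2 k)⟩
    exact ⟨t (max N N') - l ⊔ l', ⟨l ⊔ l', hll', max N N', rfl⟩,
      sub_le_sub (ht (le_max_left N N')) le_sup_left,
      sub_le_sub (ht (le_max_right N N')) le_sup_right⟩
  have hglb : IsGLB A 0 := by
    refine ⟨?_, fun w hw => ?_⟩
    · rintro _ ⟨l, hl, N, rfl⟩
      exact sub_nonneg.2 (hl.2 N)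
    -- `w⁺` is a lower bound of `A` too, so every positive lower bound of `t` stays one after
    -- adding `w⁺`; hence all multiples of `w⁺` lie below `t 0`.
    have hshift : ∀ l ∈ L, l + w⁺ ∈ L := fun l hl =>
      ⟨add_nonneg hl.1 (posPart_nonneg w), fun k =>
        le_sub_iff_add_le'.1 (sup_le (hw ⟨l, hl, k, rfl⟩) (sub_nonneg.2 (hl.2 k)))⟩
    have hmul : ∀ n : ℕ, n • w⁺ ∈ L := by
      intro n
      induction n with
      | zero => exact ⟨(zero_nsmul w⁺).ge, fun k => (zero_nsmul w⁺).trans_le (h0 k)⟩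
      | succ n ih => simpa [succ_nsmul] using hshift _ ih
    exact (le_posPart w).trans
      (eq_zero_of_forall_nsmul_le (posPart_nonneg w) fun n => (hmul n).2 0).le
  rw [Metric.cauchySeq_iff']
  intro δ hδ
  obtain ⟨_, ⟨l, hl, N, rfl⟩, hlt⟩ :=
    hoc A ⟨t 0 - 0, 0, ⟨le_rfl, h0⟩, 0, rfl⟩ hdir hglb δ hδ
  refine ⟨N, fun n hn => ?_⟩
  rw [dist_comm, dist_eq_norm]
  exact (norm_le_norm_of_nonneg_of_le (sub_nonneg.2 (ht hn))
    (sub_le_sub_left (hl.2 n) _)).trans_lt hlt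

theorem HasOrderContinuousNorm.cauchySeq_of_monotone (hoc : HasOrderContinuousNorm E)
    {s : ℕ → E} (hs : Monotone s) {x : E} (hx : ∀ k, s k ≤ x) : CauchySeq s := by
  have := hoc.cauchySeq_of_antitone (t := fun k => x - s k) (fun _ _ h => sub_le_sub_left (hs h) x)
    fun k => sub_nonneg.2 (hx k)
  simpa using this.neg.const_add (x := x)

theorem exists_strongDual_eq_of_additive_on_nonneg {p : E → ℝ} {K : ℝ} (hK : 0 ≤ K)
    (hadd : ∀ u v, 0 ≤ u → 0 ≤ v → p (u + v) = p u + p v)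
    (hbound : ∀ u, 0 ≤ u → |p u| ≤ K * ‖u‖) :
    ∃ φ : StrongDual ℝ E, ∀ u, 0 ≤ u → φ u = p u := by
  have hp0 : p 0 = 0 := by simpa using hadd 0 0 le_rfl le_rfl
  have hwd : ∀ a b c d : E, 0 ≤ a → 0 ≤ b → 0 ≤ c → 0 ≤ d → a - b = c - d →
      p a - p b = p c - p d := by
    intro a b c d ha hb hc hd h
    have := hadd a d ha hd
    rw [sub_eq_sub_iff_add_eq_add.1 h, hadd c b hc hb] at this
    linarith
  let φ : E →+ ℝ := AddMonoidHom.mk' (fun x => p x⁺ - p x⁻) fun x y => by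
    have hsplit : (x + y)⁺ - (x + y)⁻ = (x⁺ + y⁺) - (x⁻ + y⁻) := by
      rw [posPart_sub_negPart, add_sub_add_comm, posPart_sub_negPart, posPart_sub_negPart]
    rw [hwd _ _ _ _ (posPart_nonneg _) (negPart_nonneg _) (add_nonneg (posPart_nonneg x)
      (posPart_nonneg y)) (add_nonneg (negPart_nonneg x) (negPart_nonneg y)) hsplit,
      hadd _ _ (posPart_nonneg x) (posPart_nonneg y),
      hadd _ _ (negPart_nonneg x) (negPart_nonneg y)]
    ring
  have hφ : ∀ x, ‖φ x‖ ≤ 2 * K * ‖x‖ := fun x => calc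
    ‖φ x‖ ≤ |p x⁺| + |p x⁻| := abs_sub _ _
    _ ≤ K * ‖x⁺‖ + K * ‖x⁻‖ :=
        add_le_add (hbound _ (posPart_nonneg x)) (hbound _ (negPart_nonneg x))
    _ ≤ K * ‖x‖ + K * ‖x‖ := add_le_add (mul_le_mul_of_nonneg_left (norm_posPart_le x) hK)
        (mul_le_mul_of_nonneg_left (norm_negPart_le x) hK)
    _ = 2 * K * ‖x‖ := by ring
  refine ⟨φ.toRealLinearMap (AddMonoidHomClass.continuous_of_bound φ _ hφ), fun u hu => ?_⟩
  simp [φ, posPart_eq_self.2 hu, negPart_eq_zero.2 hu, hp0]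

end NormedLattice

section RieszKantorovich

variable {E : Type*} [NormedAddCommGroup E] [Lattice E] [NormedSpace ℝ E]

/-- The Riesz–Kantorovich formula for `(f ⊓ g) u`, `0 ≤ u`. -/
noncomputable def rieszKantorovichInf (f g : StrongDual ℝ E) (u : E) : ℝ :=
  sInf ((fun y => f y + g (u - y)) '' Set.Icc 0 u)

variable {f g : StrongDual ℝ E} {u : E}

theorem le_rieszKantorovichInf (hu : 0 ≤ u) {c : ℝ}
    (h : ∀ y ∈ Set.Icc 0 u, c ≤ f y + g (u - y)) : c ≤ rieszKantorovichInf f g u :=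
  le_csInf ((Set.nonempty_Icc.2 hu).image _) (Set.forall_mem_image.2 h)

theorem exists_apply_add_apply_sub_lt (hu : 0 ≤ u) {c : ℝ} (h : rieszKantorovichInf f g u < c) :
    ∃ y ∈ Set.Icc 0 u, f y + g (u - y) < c := by
  by_contra! hc
  exact h.not_ge (le_rieszKantorovichInf hu hc)

variable [IsOrderedAddMonoid E] [HasSolidNorm E]

theorem neg_mul_norm_le_apply_add_apply_sub {y : E} (hy : y ∈ Set.Icc 0 u) :
    -((‖f‖ + ‖g‖) * ‖u‖) ≤ f y + g (u - y) := by
  have hfy : |f y| ≤ ‖f‖ * ‖u‖ :=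
    (f.le_opNorm y).trans (mul_le_mul_of_nonneg_left (norm_le_norm_of_nonneg_of_le hy.1 hy.2)
      (norm_nonneg f))
  have hgy : |g (u - y)| ≤ ‖g‖ * ‖u‖ :=
    (g.le_opNorm (u - y)).trans (mul_le_mul_of_nonneg_left
      (norm_le_norm_of_nonneg_of_le (sub_nonneg.2 hy.2) (sub_le_self u hy.1)) (norm_nonneg g))
  linarith [neg_abs_le (f y), neg_abs_le (g (u - y))]

theorem rieszKantorovichInf_le {y : E} (hy : y ∈ Set.Icc 0 u) :
    rieszKantorovichInf f g u ≤ f y + g (u - y) :=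
  csInf_le ⟨_, Set.forall_mem_image.2 fun _ hz => neg_mul_norm_le_apply_add_apply_sub hz⟩
    (Set.mem_image_of_mem _ hy)

theorem rieszKantorovichInf_le_apply_left (hu : 0 ≤ u) : rieszKantorovichInf f g u ≤ f u := by
  simpa using rieszKantorovichInf_le (f := f) (g := g) ⟨hu, le_rfl⟩

theorem rieszKantorovichInf_le_apply_right (hu : 0 ≤ u) : rieszKantorovichInf f g u ≤ g u := by
  simpa using rieszKantorovichInf_le (f := f) (g := g) ⟨le_rfl, hu⟩

theorem abs_rieszKantorovichInf_le (hu : 0 ≤ u) :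
    |rieszKantorovichInf f g u| ≤ (‖f‖ + ‖g‖) * ‖u‖ := by
  refine abs_le.2
    ⟨le_rieszKantorovichInf hu fun _ hy => neg_mul_norm_le_apply_add_apply_sub hy, ?_⟩
  calc rieszKantorovichInf f g u ≤ f u := rieszKantorovichInf_le_apply_left hu
    _ ≤ ‖f‖ * ‖u‖ := (le_abs_self _).trans (f.le_opNorm u)
    _ ≤ (‖f‖ + ‖g‖) * ‖u‖ := by gcongr; exact le_add_of_nonneg_right (norm_nonneg g)

theorem rieszKantorovichInf_add {v : E} (hu : 0 ≤ u) (hv : 0 ≤ v) :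
    rieszKantorovichInf f g (u + v) = rieszKantorovichInf f g u + rieszKantorovichInf f g v := by
  apply le_antisymm
  · rw [← sub_le_iff_le_add']
    refine le_rieszKantorovichInf hv fun z hz => ?_
    rw [sub_le_iff_le_add', ← sub_le_iff_le_add]
    refine le_rieszKantorovichInf hu fun y hy => ?_
    have := rieszKantorovichInf_le (f := f) (g := g)
      (⟨add_nonneg hy.1 hz.1, add_le_add hy.2 hz.2⟩ : y + z ∈ Set.Icc 0 (u + v))
    rw [map_add, add_sub_add_comm, map_add] at this
    linarith
  · refine le_rieszKantorovichInf (add_nonneg hu hv) fun w hw => ?_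
    -- Riesz decomposition: `w = w ⊓ u + (w - w ⊓ u)` with `0 ≤ w - w ⊓ u ≤ v`.
    have h₁ := rieszKantorovichInf_le (f := f) (g := g)
      (⟨le_inf hw.1 hu, inf_le_right⟩ : w ⊓ u ∈ Set.Icc 0 u)
    have h₂ := rieszKantorovichInf_le (f := f) (g := g)
      (⟨sub_nonneg.2 inf_le_left, sub_inf_le_of_le_add hv hw.2⟩ : w - w ⊓ u ∈ Set.Icc 0 v)
    have hf : f (w ⊓ u) + f (w - w ⊓ u) = f w := by rw [← map_add, add_sub_cancel]
    have hg : g (u - w ⊓ u) + g (v - (w - w ⊓ u)) = g (u + v - w) := by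
      rw [← map_add]; congr 1; abel
    linarith

end RieszKantorovich

section DualOrder

variable {E : Type*} [NormedAddCommGroup E] [Lattice E] [NormedSpace ℝ E]
  [Lattice (StrongDual ℝ E)]
  (hord : ∀ f g : StrongDual ℝ E, f ≤ g ↔ ∀ x : E, 0 ≤ x → f x ≤ g x)
include hord

theorem isOrderedAddMonoid_strongDual : IsOrderedAddMonoid (StrongDual ℝ E) where
  add_le_add_left f g hfg h := (hord _ _).2 fun x hx => by simpa using (hord f g).1 hfg x hx

theorem apply_nonneg_of_nonneg_s17 {f : StrongDual ℝ E} (hf : 0 ≤ f) {x : E} (hx : 0 ≤ x) :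
    0 ≤ f x := by
  simpa using (hord 0 f).1 hf x hx

theorem abs_apply_le {f : StrongDual ℝ E} {x : E} (hx : 0 ≤ x) : |f x| ≤ |f| x := by
  have hneg : -f x ≤ |f| x := (hord (-f) |f|).1 le_sup_right x hx
  exact abs_le.2 ⟨neg_le.1 hneg, (hord f |f|).1 le_sup_left x hx⟩

variable [IsOrderedAddMonoid E]

theorem apply_le_apply_of_nonneg {f : StrongDual ℝ E} (hf : 0 ≤ f) {x y : E} (hxy : x ≤ y) :
    f x ≤ f y := by
  simpa using apply_nonneg_of_nonneg_s17 hord hf (sub_nonneg.2 hxy)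

theorem apply_sup_eq_zero {f : StrongDual ℝ E} (hf : 0 ≤ f) {a b : E} (ha : 0 ≤ a)
    (hb : 0 ≤ b) (hfa : f a = 0) (hfb : f b = 0) : f (a ⊔ b) = 0 := by
  refine le_antisymm ?_ (apply_nonneg_of_nonneg_s17 hord hf (le_sup_of_le_left ha))
  simpa [hfa, hfb] using apply_le_apply_of_nonneg hord hf
    (sup_le (le_add_of_nonneg_right hb) (le_add_of_nonneg_left ha))

theorem abs_apply_le_apply_abs (f : StrongDual ℝ E) (v : E) : |f v| ≤ |f| |v| :=
  calc |f v| = |f v⁺ - f v⁻| := by rw [← map_sub, posPart_sub_negPart]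
    _ ≤ |f v⁺| + |f v⁻| := abs_sub _ _
    _ ≤ |f| v⁺ + |f| v⁻ :=
      add_le_add (abs_apply_le hord (posPart_nonneg v)) (abs_apply_le hord (negPart_nonneg v))
    _ = |f| |v| := by rw [← map_add, posPart_add_negPart]

variable [HasSolidNorm E]

theorem exists_le_le_eq_rieszKantorovichInf (f g : StrongDual ℝ E) :
    ∃ φ : StrongDual ℝ E, φ ≤ f ∧ φ ≤ g ∧
      ∀ u, 0 ≤ u → φ u = rieszKantorovichInf f g u := by
  obtain ⟨φ, hφ⟩ := exists_strongDual_eq_of_additive_on_nonneg (p := rieszKantorovichInf f g)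
    (K := ‖f‖ + ‖g‖) (by positivity)
    (fun u v hu hv => rieszKantorovichInf_add hu hv) fun u hu => abs_rieszKantorovichInf_le hu
  exact ⟨φ, (hord _ _).2 fun u hu => (hφ u hu).trans_le (rieszKantorovichInf_le_apply_left hu),
    (hord _ _).2 fun u hu => (hφ u hu).trans_le (rieszKantorovichInf_le_apply_right hu), hφ⟩

theorem exists_apply_add_apply_sub_lt_of_inf_eq_zero {f g : StrongDual ℝ E} (hfg : f ⊓ g = 0)
    {u : E} (hu : 0 ≤ u) {δ : ℝ} (hδ : 0 < δ) :
    ∃ y ∈ Set.Icc 0 u, f y + g (u - y) < δ := by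
  obtain ⟨φ, hφf, hφg, hφ⟩ := exists_le_le_eq_rieszKantorovichInf hord f g
  have hφu : φ u ≤ 0 := by simpa using (hord φ 0).1 (hfg ▸ le_inf hφf hφg) u hu
  exact exists_apply_add_apply_sub_lt hu ((hφ u hu ▸ hφu).trans_lt hδ)

theorem norm_abs_le (f : StrongDual ℝ E) : ‖|f|‖ ≤ 2 * ‖f‖ := by
  have := isOrderedAddMonoid_strongDual hord
  obtain ⟨φ, hφf, hφg, hφ⟩ := exists_le_le_eq_rieszKantorovichInf hord f (-f)
  have habs : |f| ≤ -φ := sup_le (le_neg.2 hφg) (neg_le_neg hφf)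
  have hpos : ∀ u, 0 ≤ u → |f| u ≤ 2 * ‖f‖ * ‖u‖ := fun u hu => calc
    |f| u ≤ -φ u := (hord _ _).1 habs u hu
    _ ≤ (‖f‖ + ‖-f‖) * ‖u‖ := by
        rw [hφ u hu]; exact (neg_le_abs _).trans (abs_rieszKantorovichInf_le hu)
    _ = 2 * ‖f‖ * ‖u‖ := by rw [norm_neg]; ring
  refine ContinuousLinearMap.opNorm_le_bound _ (by positivity) fun v => ?_
  calc ‖|f| v‖ ≤ |(|f|)| |v| := abs_apply_le_apply_abs hord |f| v
    _ ≤ 2 * ‖f‖ * ‖v‖ := by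
        rw [abs_abs, ← norm_abs_eq_norm v]; exact hpos _ (abs_nonneg v)

end DualOrder

theorem exists_seq_of_forall_mem_exists_mem {β : Type*} {S : Set β}
    {P : ℕ → β → β → Prop} {x : β} (hx : x ∈ S) (h : ∀ k, ∀ r ∈ S, ∃ y ∈ S, P k r y) :
    ∃ t : ℕ → β, t 0 = x ∧ ∀ k, t k ∈ S ∧ P k (t k) (t (k + 1)) := by
  choose Y hYS hY using h
  let t : ℕ → S := fun k => Nat.rec ⟨x, hx⟩ (fun k r => ⟨Y k r r.2, hYS k r r.2⟩) k
  exact ⟨fun k => (t k).1, rfl, fun k => ⟨(t k).2, hY k _ (t k).2⟩⟩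

section DisjointSequence

variable {E : Type*} [NormedAddCommGroup E] [Lattice E] [IsOrderedAddMonoid E] [HasSolidNorm E]
  [NormedSpace ℝ E] [Lattice (StrongDual ℝ E)]
  (hord : ∀ f g : StrongDual ℝ E, f ≤ g ↔ ∀ x : E, 0 ≤ x → f x ≤ g x)
  {g : ℕ → StrongDual ℝ E} (hg : ∀ n, 0 ≤ g n) (hd : Pairwise fun i j => g i ⊓ g j = 0)
include hord hg hd

theorem exists_sum_apply_lt_and_apply_sub_lt {m : ℕ} {s : Finset ℕ} (hm : m ∉ s) {r : E}
    (hr : 0 ≤ r) {δ : ℝ} (hδ : 0 < δ) :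
    ∃ y ∈ Set.Icc 0 r, (∑ i ∈ s, g i) y < δ ∧ g m (r - y) < δ := by
  have := isOrderedAddMonoid_strongDual hord
  have hsum : (∑ i ∈ s, g i) ⊓ g m = 0 := by
    induction s using Finset.induction_on with
    | empty => simpa using hg m
    | insert a s ha ih =>
      rw [Finset.sum_insert ha]
      exact add_inf_eq_zero (hd (ne_of_mem_of_not_mem (Finset.mem_insert_self a s) hm))
        (ih fun h => hm (Finset.mem_insert_of_mem h))
  obtain ⟨y, hy, hlt⟩ := exists_apply_add_apply_sub_lt_of_inf_eq_zero hord hsum hr hδ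
  have h₁ :=
    apply_nonneg_of_nonneg_s17 hord (f := ∑ i ∈ s, g i) (Finset.sum_nonneg fun i _ => hg i) hy.1
  have h₂ := apply_nonneg_of_nonneg_s17 hord (hg m) (sub_nonneg.2 hy.2)
  exact ⟨y, hy, by linarith, by linarith⟩

variable [CompleteSpace E] (hoc : HasOrderContinuousNorm E)
include hoc

theorem exists_mem_Icc_apply_eq_zero_of_ne {x : E} (hx : 0 ≤ x) (m : ℕ) {ε : ℝ}
    (hε : 0 < ε) :
    ∃ t ∈ Set.Icc 0 x, (∀ i ≠ m, g i t = 0) ∧ g m x - ε ≤ g m t := by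
  have := isOrderedAddMonoid_strongDual hord
  set F : ℕ → StrongDual ℝ E := fun k => ∑ i ∈ (Finset.range (k + 1)).erase m, g i
  obtain ⟨t, ht_zero, ht⟩ := exists_seq_of_forall_mem_exists_mem (S := Set.Ici 0)
    (P := fun k r y => y ≤ r ∧ F k y < ε / 2 ^ (k + 1) ∧ g m (r - y) < ε / 2 ^ (k + 1)) hx
    fun k r hr => by
      obtain ⟨y, hy, h⟩ := exists_sum_apply_lt_and_apply_sub_lt hord hg hd
        (Finset.notMem_erase m _) hr (by positivity : (0 : ℝ) < ε / 2 ^ (k + 1))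
      exact ⟨y, hy.1, hy.2, h⟩
  have ht0 : ∀ k, 0 ≤ t k := fun k => (ht k).1
  have hanti : Antitone t := antitone_nat_of_succ_le fun k => (ht k).2.1
  obtain ⟨l, hl⟩ := cauchySeq_tendsto_of_complete (hoc.cauchySeq_of_antitone hanti ht0)
  have hl0 : 0 ≤ l := ge_of_tendsto' hl ht0
  refine ⟨l, ⟨hl0, ht_zero ▸ hanti.le_of_tendsto hl 0⟩, fun i hi => ?_, ?_⟩
  · have hδ : Tendsto (fun k : ℕ => ε / 2 ^ (k + 1)) atTop (𝓝 0) :=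
      tendsto_const_nhds.div_atTop
        ((tendsto_pow_atTop_atTop_of_one_lt one_lt_two).comp (tendsto_add_atTop_nat 1))
    refine le_antisymm (ge_of_tendsto hδ (eventually_atTop.2 ⟨i, fun k hik => ?_⟩))
      (apply_nonneg_of_nonneg_s17 hord (hg i) hl0)
    calc g i l ≤ g i (t (k + 1)) :=
          apply_le_apply_of_nonneg hord (hg i) (hanti.le_of_tendsto hl _)
      _ ≤ F k (t (k + 1)) := (hord _ _).1 (Finset.single_le_sum (fun j _ => hg j)
          (Finset.mem_erase.2 ⟨hi, Finset.mem_range.2 (Nat.lt_succ_of_le hik)⟩)) _ (ht0 _)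
      _ ≤ ε / 2 ^ (k + 1) := (ht k).2.2.1.le
  · have hacc : ∀ k, g m x - ε + ε / 2 ^ k ≤ g m (t k) := by
      intro k
      induction k with
      | zero => simp [ht_zero]
      | succ k ih =>
        have h := (ht k).2.2.2
        have hhalf : ε / 2 ^ k = ε / 2 ^ (k + 1) + ε / 2 ^ (k + 1) := by rw [pow_succ]; ring
        rw [map_sub] at h
        linarith
    refine ge_of_tendsto' (((g m).continuous.tendsto l).comp hl) fun k => ?_
    have : 0 ≤ ε / 2 ^ k := by positivity
    linarith [hacc k, show (g m ∘ t) k = g m (t k) from rfl]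

theorem exists_apply_lt_of_pairwise_inf_eq_zero {C : ℝ} (hC : ∀ n, ‖g n‖ ≤ C) {x : E}
    (hx : 0 ≤ x) {ε : ℝ} (hε : 0 < ε) : ∃ n, g n x < ε := by
  by_contra! hge
  choose t ht hzero hbig using
    fun n => exists_mem_Icc_apply_eq_zero_of_ne hord hg hd hoc hx n (half_pos hε)
  set s := partialSups t
  have hs0 : ∀ k, 0 ≤ s k := fun k => (ht 0).1.trans (le_partialSups_of_le t (Nat.zero_le k))
  have hvanish : ∀ k n, k < n → g n (s k) = 0 := by
    intro k
    induction k with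
    | zero => intro n hn; simpa [s] using hzero 0 n hn.ne'
    | succ k ih =>
      intro n hn
      rw [partialSups_add_one]
      exact apply_sup_eq_zero hord (hg n) (hs0 k) (ht _).1 (ih n (by omega)) (hzero _ n (by omega))
  have hjump : ∀ k, ε / 2 ≤ g (k + 1) (s (k + 1) - s k) := fun k => by
    rw [map_sub, hvanish k (k + 1) k.lt_succ_self, sub_zero]
    calc ε / 2 ≤ g (k + 1) x - ε / 2 := by linarith [hge (k + 1)]
      _ ≤ g (k + 1) (t (k + 1)) := hbig (k + 1)
      _ ≤ g (k + 1) (s (k + 1)) := apply_le_apply_of_nonneg hord (hg _) (le_partialSups t (k + 1))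
  have hC' : 0 < |C| + 1 := by positivity
  obtain ⟨N, hN⟩ := Metric.cauchySeq_iff'.1 (hoc.cauchySeq_of_monotone (partialSups_monotone t)
    fun k => partialSups_le t k x fun j _ => (ht j).2) (ε / 2 / (|C| + 1)) (by positivity)
  have hsmall : ‖s (N + 1) - s N‖ < ε / 2 / (|C| + 1) := by
    simpa only [dist_eq_norm] using hN (N + 1) N.le_succ
  have hgN : g (N + 1) (s (N + 1) - s N) ≤ (|C| + 1) * ‖s (N + 1) - s N‖ :=
    (le_abs_self _).trans (((g _).le_opNorm _).trans
      (by gcongr; linarith [hC (N + 1), le_abs_self C]))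
  rw [lt_div_iff₀ hC'] at hsmall
  linarith [hjump N]

theorem tendsto_apply_of_pairwise_inf_eq_zero {C : ℝ} (hC : ∀ n, ‖g n‖ ≤ C) {x : E}
    (hx : 0 ≤ x) : Tendsto (fun n => g n x) atTop (𝓝 0) := by
  refine tendsto_order.2 ⟨fun a ha => Eventually.of_forall fun n =>
    ha.trans_le (apply_nonneg_of_nonneg_s17 hord (hg n) hx), fun ε hε => ?_⟩
  by_contra hev
  obtain ⟨φ, hφ, hφε⟩ := extraction_of_frequently_atTop (not_eventually.1 hev)
  obtain ⟨n, hn⟩ := exists_apply_lt_of_pairwise_inf_eq_zero hord (fun n => hg (φ n))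
    (hd.comp_of_injective hφ.injective) hoc (fun n => hC (φ n)) hx hε
  exact hφε n hn

end DisjointSequence


variable {E : Type*} [NormedAddCommGroup E] [Lattice E] [IsOrderedAddMonoid E] [HasSolidNorm E] [NormedSpace ℝ E] [CompleteSpace E]
  [Lattice (StrongDual ℝ E)]

/-- In an order continuous Banach lattice, every norm bounded pairwise disjoint
sequence in the dual is weak* null. -/
theorem disjoint_weakStar_null (hord : ∀ f g : StrongDual ℝ E, f ≤ g ↔ ∀ x : E, 0 ≤ x → f x ≤ g x) (hoc : HasOrderContinuousNorm E)
    (x' : ℕ → StrongDual ℝ E) (hb : ∃ C, ∀ n, ‖x' n‖ ≤ C)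
    (hd : Pairwise fun m n => |x' m| ⊓ |x' n| = 0) : WeakStarNull E x' := by
  obtain ⟨C, hC⟩ := hb
  have := isOrderedAddMonoid_strongDual hord
  intro v
  refine squeeze_zero_norm (fun n => abs_apply_le_apply_abs hord (x' n) v) ?_
  exact tendsto_apply_of_pairwise_inf_eq_zero hord (fun n => abs_nonneg (x' n)) hd hoc
    (fun n => (norm_abs_le hord (x' n)).trans (mul_le_mul_of_nonneg_left (hC n) zero_le_two))
    (abs_nonneg v)
end
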